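/- The function g(x) := 4e^x(e^{2x}+3)/(−24e^x + 6e^{2x} + 8e^{3x} + e^{4x} + 9) is positive for x > 0 and satisfies x·g(x) → 1 as x → 0⁺. Consequently ∫₀¹ √(g(x)) dx < ∞. -/

import Mathlib

open Real MeasureTheory

noncomputable def g8 (x : ℝ) : ℝ :=
  4 * exp x * (exp (2 * x) + 3) /
    (-24 * exp x + 6 * exp (2 * x) + 8 * exp (3 * x) + exp (4 * x) + 9)

/-!
With `u = eˣ` the denominator of `g8` factors as `(u - 1)(u³ + 9u² + 15u - 9)`, so
`x · g8 x = (x / (eˣ - 1)) · g8Factor (eˣ)` where `g8Factor` is continuous at `u = 1` with value `1`.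
This gives positivity and the limit. Moreover `u³ + 9u² + 15u - 9 - 4u(u² + 3) = 3(3 - u)(u² - 1)`,
so `g8Factor ≤ 1` on `[1, 3]`; with `eˣ - 1 ≥ x` this yields `g8 x ≤ 1 / x` on `(0, 1]`, and
`√g8` is dominated by the integrable function `x ^ (-1/2)`.
-/

open Filter Topology Set

noncomputable def g8Factor (u : ℝ) : ℝ :=
  4 * u * (u ^ 2 + 3) / (u ^ 3 + 9 * u ^ 2 + 15 * u - 9)

lemma g8_eq_g8Factor_div (x : ℝ) : g8 x = g8Factor (exp x) / (exp x - 1) := by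
  have hexp (n : ℕ) : exp (n * x) = exp x ^ n := by rw [← exp_nat_mul]
  rw [g8, g8Factor, div_div, show (2 : ℝ) = (2 : ℕ) by norm_num, show (3 : ℝ) = (3 : ℕ) by norm_num,
    show (4 : ℝ) = (4 : ℕ) by norm_num, hexp, hexp, hexp]
  push_cast
  ring

lemma sixteen_le_g8Factor_denom {u : ℝ} (hu : 1 ≤ u) : 16 ≤ u ^ 3 + 9 * u ^ 2 + 15 * u - 9 := by
  nlinarith

lemma g8Factor_pos {u : ℝ} (hu : 1 ≤ u) : 0 < g8Factor u :=
  div_pos (by positivity) (by linarith [sixteen_le_g8Factor_denom hu])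

lemma g8Factor_le_one {u : ℝ} (hu₁ : 1 ≤ u) (hu₃ : u ≤ 3) : g8Factor u ≤ 1 := by
  rw [g8Factor, div_le_one (by linarith [sixteen_le_g8Factor_denom hu₁])]
  nlinarith [mul_nonneg (sub_nonneg.2 hu₃) (mul_nonneg (sub_nonneg.2 hu₁) (by linarith : (0:ℝ) ≤ u + 1))]

lemma tendsto_g8Factor_exp : Tendsto (fun x => g8Factor (exp x)) (𝓝 0) (𝓝 1) := by
  have hcont : ContinuousAt (fun x => g8Factor (exp x)) 0 := by
    refine ContinuousAt.div (by fun_prop) (by fun_prop) ?_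
    norm_num
  convert hcont.tendsto
  norm_num [g8Factor]

lemma tendsto_div_exp_sub_one : Tendsto (fun x => x / (exp x - 1)) (𝓝[≠] 0) (𝓝 1) := by
  have hslope : Tendsto (slope exp 0) (𝓝[≠] 0) (𝓝 1) := by
    simpa using hasDerivAt_iff_tendsto_slope.1 (hasDerivAt_exp 0)
  simpa [slope_def_field] using hslope.inv₀ one_ne_zero

lemma g8_pos {x : ℝ} (hx : 0 < x) : 0 < g8 x := by
  rw [g8_eq_g8Factor_div]
  exact div_pos (g8Factor_pos (one_le_exp hx.le)) (sub_pos.2 (one_lt_exp_iff.2 hx))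

lemma tendsto_mul_g8 : Tendsto (fun x => x * g8 x) (𝓝[>] 0) (𝓝 1) := by
  have hprod := (tendsto_div_exp_sub_one.mono_left (nhdsWithin_mono 0 fun x hx => ne_of_gt hx)).mul
    (tendsto_g8Factor_exp.mono_left nhdsWithin_le_nhds)
  rw [one_mul] at hprod
  refine hprod.congr fun x => ?_
  rw [g8_eq_g8Factor_div]
  ring

lemma mul_g8_le_one {x : ℝ} (hx₀ : 0 < x) (hx₁ : x ≤ 1) : x * g8 x ≤ 1 := by
  have hexp_sub : x ≤ exp x - 1 := by linarith [add_one_le_exp x]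
  have hexp_le : exp x ≤ 3 :=
    (exp_le_exp.2 hx₁).trans (exp_one_lt_d9.le.trans (by norm_num))
  rw [g8_eq_g8Factor_div, ← mul_div_assoc, div_le_one (hx₀.trans_le hexp_sub)]
  calc x * g8Factor (exp x) ≤ x * 1 := by
        gcongr; exact g8Factor_le_one (one_le_exp hx₀.le) hexp_le
    _ ≤ exp x - 1 := by linarith

lemma sqrt_g8_le_rpow {x : ℝ} (hx₀ : 0 < x) (hx₁ : x ≤ 1) :
    √(g8 x) ≤ x ^ (-(1 / 2) : ℝ) := by
  have hg : g8 x ≤ x⁻¹ := by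
    rw [← one_div, le_div_iff₀ hx₀, mul_comm]
    exact mul_g8_le_one hx₀ hx₁
  calc √(g8 x) ≤ √(x⁻¹) := sqrt_le_sqrt hg
    _ = x ^ (-(1 / 2) : ℝ) := by rw [sqrt_inv, sqrt_eq_rpow, rpow_neg hx₀.le]

lemma measurable_g8 : Measurable g8 := by
  unfold g8
  fun_prop

lemma integrableOn_sqrt_g8 : IntegrableOn (fun x => √(g8 x)) (Ioo 0 1) := by
  refine Integrable.mono' ((intervalIntegral.integrableOn_Ioo_rpow_iff zero_lt_one).2
    (by norm_num : (-1 : ℝ) < -(1 / 2)))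
    (continuous_sqrt.measurable.comp measurable_g8).aestronglyMeasurable ?_
  refine (ae_restrict_iff' measurableSet_Ioo).2 (ae_of_all _ fun x hx => ?_)
  rw [norm_of_nonneg (sqrt_nonneg _)]
  exact sqrt_g8_le_rpow hx.1 hx.2.le

theorem figure8_pressure_incomplete :
    (∀ x > 0, 0 < g8 x) ∧
    Filter.Tendsto (fun x => x * g8 x) (nhdsWithin 0 (Set.Ioi 0)) (nhds 1) ∧
    IntegrableOn (fun x => Real.sqrt (g8 x)) (Set.Ioo 0 1) :=
  ⟨fun _ hx => g8_pos hx, tendsto_mul_g8, integrableOn_sqrt_g8⟩
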